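/- arXiv:2212.04888 — 4 statements merged into one kernel-verified Lean document; each statement's English description precedes it below -/
import Mathlib

section
/- Let W be a torsion-free ℂ[[ħ]]-module and let β(z) = ∑_{m∈ℤ} β_m z^{-m-1} be a formal series with coefficients β_m ∈ W. Let f(z) = ∑_{i=0}^n a_i z^i ∈ ℂ[z] be monic of degree n, and let k ∈ ℤ. If the singular part (the terms with negative powers of z) of z^k · ħ^n f(z/ħ) · β(z) vanishes, then for every m ≥ k, β_m lies in the ℂ[[ħ]]-span of {β_i : k ≤ i < k+n}. Moreover, if β_i = 0 for all k ≤ i < k+n, then the singular part of z^k β(z) vanishes. -/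
/-! Because `f` is monic, the vanishing of the singular part says that `β_j`, for `j ≥ k + n`, is a
`ℂ[[ħ]]`-combination of `β_{j-n}, …, β_{j-1}`; induction on `j` puts every `β_m`, `m ≥ k`, in the
span of the first `n` of them, and that span is `0` when they vanish. -/

open Submodule

theorem mem_span_Ico_of_monic_recurrence {R M : Type*} [Ring R] [AddCommGroup M] [Module R M]
    (n : ℕ) (c : ℕ → R) (hc : c n = 1) (β : ℤ → M) (j : ℤ)
    (hrec : ∑ i ∈ Finset.range (n + 1), c i • β (j - n + i) = 0) :
    β j ∈ span R (β '' Set.Ico (j - n) j) := by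
  rw [Finset.sum_range_succ, hc, one_smul, sub_add_cancel, add_eq_zero_iff_neg_eq] at hrec
  rw [← hrec]
  refine neg_mem (sum_mem fun i hi => smul_mem _ _ (subset_span ⟨_, ?_, rfl⟩))
  simp only [Finset.mem_range] at hi
  constructor <;> omega

theorem mem_span_Ico_of_forall_mem_span_Ico {R M : Type*} [Semiring R] [AddCommMonoid M]
    [Module R M] (β : ℤ → M) (k : ℤ) (n : ℕ)
    (h : ∀ j, k + n ≤ j → β j ∈ span R (β '' Set.Ico k j)) (m : ℤ) (hm : k ≤ m) :
    β m ∈ span R (β '' Set.Ico k (k + n)) := by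
  have hspan : ∀ j, k + n ≤ j → span R (β '' Set.Ico k j) ≤ span R (β '' Set.Ico k (k + n)) := by
    intro j hj
    induction j, hj using Int.leInduction with
    | base => exact le_rfl
    | succ j hj ih =>
      rw [← Set.insert_Ico_right_eq_Ico_add_one (by omega), Set.image_insert_eq,
        span_insert, sup_le_iff, span_singleton_le_iff_mem]
      exact ⟨ih (h j hj), ih⟩
  exact hspan (max (m + 1) (k + n)) (le_max_right _ _)
    (subset_span ⟨m, ⟨hm, by omega⟩, rfl⟩)

theorem stmt0_general (W : Type*) [AddCommGroup W] [Module (PowerSeries ℂ) W]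
    (n : ℕ) (a : ℕ → ℂ) (hmonic : a n = 1) (k : ℤ) (β : ℤ → W)
    (hsing : ∀ m : ℤ, 0 ≤ m →
      ∑ i ∈ Finset.range (n + 1),
        (PowerSeries.C (a i) * (PowerSeries.X : PowerSeries ℂ) ^ (n - i)) •
          β (m + k + (i : ℤ)) = 0) :
    (∀ m : ℤ, k ≤ m → β m ∈ Submodule.span (PowerSeries ℂ)
        (β '' {i : ℤ | k ≤ i ∧ i < k + (n : ℤ)})) ∧
    ((∀ i : ℤ, k ≤ i → i < k + (n : ℤ) → β i = 0) → ∀ m : ℤ, k ≤ m → β m = 0) := by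
  have hspan : ∀ m, k ≤ m → β m ∈ span (PowerSeries ℂ) (β '' Set.Ico k (k + n)) := by
    refine mem_span_Ico_of_forall_mem_span_Ico β k n fun j hj => ?_
    have hrec := mem_span_Ico_of_monic_recurrence n
      (fun i => PowerSeries.C (a i) * PowerSeries.X ^ (n - i)) (by simp [hmonic]) β j
      (by simpa only [sub_add_cancel] using hsing (j - n - k) (by omega))
    exact span_mono (Set.image_mono (Set.Ico_subset_Ico_left (by omega))) hrec
  refine ⟨hspan, fun hvanish m hm => ?_⟩
  have hbot : span (PowerSeries ℂ) (β '' Set.Ico k (k + n)) = ⊥ := by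
    rw [span_eq_bot]
    rintro _ ⟨i, ⟨hki, hin⟩, rfl⟩
    exact hvanish i hki hin
  simpa [hbot] using hspan m hm

theorem stmt0 (W : Type*) [AddCommGroup W] [Module (PowerSeries ℂ) W]
    (htorsionfree : ∀ w : W, w ≠ 0 → (PowerSeries.X : PowerSeries ℂ) • w ≠ 0)
    (n : ℕ) (a : ℕ → ℂ) (hmonic : a n = 1) (k : ℤ) (β : ℤ → W)
    (hsing : ∀ m : ℤ, 0 ≤ m →
      ∑ i ∈ Finset.range (n + 1),
        (PowerSeries.C (a i) * (PowerSeries.X : PowerSeries ℂ) ^ (n - i)) •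
          β (m + k + (i : ℤ)) = 0) :
    (∀ m : ℤ, k ≤ m → β m ∈ Submodule.span (PowerSeries ℂ)
        (β '' {i : ℤ | k ≤ i ∧ i < k + (n : ℤ)})) ∧
    ((∀ i : ℤ, k ≤ i → i < k + (n : ℤ) → β i = 0) → ∀ m : ℤ, k ≤ m → β m = 0) :=
  stmt0_general W n a hmonic k β hsing
end

section
/- For each integer i ≥ 0 define f_{-i}(z) = (1/(2·i!))·(-z d/dz)^i ((z+1)/(z-1)). Then ι_{z₁,z₂} f_{-i}(e^{z₁−z₂}) − ι_{z₂,z₁} f_{-i}(e^{z₁−z₂}) = (1/i!)·∂_{z₂}^i ( z₁^{-1} δ(z₂/z₁) ), where δ(z)=∑_{n∈ℤ} z^n. -/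
/-!
Only the principal part of `f_{-i}(e^z)` contributes. For `m ≥ 0` the two expansions of
`(z₁ - z₂)^m` coincide (symmetry of binomial coefficients), and the Laurent coefficients of
`f_{-i}(e^z)` in negative degree vanish except in degree `-1 - i`, where applying `-d/dz` `i` times
to the simple pole `2/z` of `(e^z+1)/(e^z-1)` gives `2 i!/z^{i+1}`. The difference of the two
expansions of `(z₁ - z₂)^{-1-i}` is read off from upper negation `C(-n-1, k) = (-1)^k C(n+k, k)`.
-/

/-- Generalized binomial coefficient `C(m,j) = m(m-1)⋯(m-j+1)/j!` for `m : ℤ`. -/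
noncomputable def cchoose (m : ℤ) (j : ℕ) : ℂ :=
  (∏ t ∈ Finset.range j, ((m : ℂ) - (t : ℂ))) / (j.factorial : ℂ)

open Finset

theorem cchoose_eq_choose (m : ℤ) (j : ℕ) : cchoose m j = Ring.choose (m : ℂ) j := by
  rw [Ring.choose_eq_smul, ← Polynomial.aeval_eq_smeval, ← Polynomial.eval_map_algebraMap,
    descPochhammer_map, descPochhammer_eval_eq_prod_range,
    cchoose, smul_eq_mul, div_eq_inv_mul]

theorem cchoose_natCast (n k : ℕ) : cchoose n k = n.choose k := by
  rw [cchoose_eq_choose, Int.cast_natCast, Ring.choose_natCast]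

theorem cchoose_neg_natCast_sub_one (n k : ℕ) :
    cchoose (-n - 1) k = (-1) ^ k * (n + k).choose k := by
  rw [cchoose_eq_choose, show ((-n - 1 : ℤ) : ℂ) = -((n + 1 : ℕ) : ℂ) by push_cast; ring,
    Ring.choose_neg, show ((n + 1 : ℕ) : ℂ) + k - 1 = ((n + k : ℕ) : ℂ) by push_cast; ring,
    Ring.choose_natCast, Int.negOnePow_def, Units.smul_def, zsmul_eq_mul]
  simp

theorem cchoose_eq_zero_of_lt {m : ℤ} {k : ℕ} (h0 : 0 ≤ m) (h : m < k) : cchoose m k = 0 := by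
  lift m to ℕ using h0
  rw [cchoose_natCast, Nat.choose_eq_zero_of_lt (by omega), Nat.cast_zero]

theorem iterate_apply_eq_prod {D : (ℤ → ℂ) → (ℤ → ℂ)}
    (hD : ∀ c m, D c m = (-((m : ℂ) + 1)) * c (m + 1)) (i : ℕ) (c : ℤ → ℂ) (m : ℤ) :
    D^[i] c m = (∏ t ∈ range i, -((m : ℂ) + t + 1)) * c (m + i) := by
  induction i generalizing c with
  | zero => simp
  | succ i ih =>
    rw [Function.iterate_succ_apply, ih, hD, prod_range_succ]
    push_cast
    ring_nf

theorem iterate_apply_eq_zero {D : (ℤ → ℂ) → (ℤ → ℂ)}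
    (hD : ∀ c m, D c m = (-((m : ℂ) + 1)) * c (m + 1)) {c : ℤ → ℂ}
    (hc : ∀ m, m < -1 → c m = 0) {i : ℕ} {m : ℤ} (hm : m ≤ -1) (hmi : m + i ≠ -1) :
    D^[i] c m = 0 := by
  rw [iterate_apply_eq_prod hD]
  rcases lt_or_gt_of_ne hmi with hlt | hgt
  · rw [hc _ hlt, mul_zero]
  · lift -m - 1 to ℕ using (by omega) with t ht
    refine mul_eq_zero_of_left (prod_eq_zero (i := t) (mem_range.2 (by omega)) ?_) _
    rw [show (t : ℂ) = ((-m - 1 : ℤ) : ℂ) by exact_mod_cast ht]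
    push_cast
    ring

theorem iterate_apply_neg_sub_one {D : (ℤ → ℂ) → (ℤ → ℂ)}
    (hD : ∀ c m, D c m = (-((m : ℂ) + 1)) * c (m + 1)) (i : ℕ) (c : ℤ → ℂ) :
    D^[i] c (-i - 1) = i.factorial * c (-1) := by
  rw [iterate_apply_eq_prod hD, show -(i : ℤ) - 1 + i = -1 by ring,
    ← prod_range_add_one_eq_factorial, Nat.cast_prod, ← prod_range_reflect]
  congr 1
  refine prod_congr rfl fun t ht => ?_
  have hti := mem_range.1 ht
  push_cast [Nat.cast_sub (by omega : t ≤ i - 1), Nat.cast_sub (by omega : 1 ≤ i)]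
  ring

/-- The coefficient of `z₁ ^ a * z₂ ^ b` in
`ι_{z₁,z₂} (z₁ - z₂) ^ (a + b) - ι_{z₂,z₁} (z₁ - z₂) ^ (a + b)`. -/
noncomputable def iotaDiffCoeff (a b : ℤ) : ℂ :=
  (if 0 ≤ b then (-1 : ℂ) ^ b * cchoose (a + b) b.toNat else 0)
    - (if 0 ≤ a then (-1 : ℂ) ^ b * cchoose (a + b) a.toNat else 0)

theorem iotaDiffCoeff_of_nonneg {a b : ℤ} (h : 0 ≤ a + b) : iotaDiffCoeff a b = 0 := by
  unfold iotaDiffCoeff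
  rcases le_or_gt 0 a with ha | ha <;> rcases le_or_gt 0 b with hb | hb
  · lift a to ℕ using ha
    lift b to ℕ using hb
    rw [← Nat.cast_add, Int.toNat_natCast, Int.toNat_natCast, cchoose_natCast, cchoose_natCast,
      Nat.choose_symm_add]
    simp
  · simp [hb.not_ge, ha, cchoose_eq_zero_of_lt h (by omega : a + b < a.toNat)]
  · simp [ha.not_ge, hb, cchoose_eq_zero_of_lt h (by omega : a + b < b.toNat)]
  · omega

theorem iotaDiffCoeff_of_add_eq {a b : ℤ} {i : ℕ} (h : a + b + i = -1) :
    iotaDiffCoeff a b = cchoose (-a - 1) i := by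
  unfold iotaDiffCoeff
  rcases le_or_gt 0 a with ha | ha <;> rcases le_or_gt 0 b with hb | hb
  · omega
  · rw [if_neg hb.not_ge, if_pos ha, zero_sub]
    lift a to ℕ using ha
    obtain rfl : b = -((a + i + 1 : ℕ) : ℤ) := by push_cast; omega
    rw [show (a : ℤ) + -((a + i + 1 : ℕ) : ℤ) = -i - 1 by push_cast; ring,
      cchoose_neg_natCast_sub_one, cchoose_neg_natCast_sub_one, ← inv_zpow', inv_neg_one,
      zpow_natCast, Int.toNat_natCast, add_comm i a, Nat.choose_symm_add, pow_succ, pow_add]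
    linear_combination
      (-1 : ℂ) ^ i * ((a + i).choose i : ℂ) * (Even.add_self a).neg_one_pow (α := ℂ)
  · rw [if_pos hb, if_neg ha.not_ge, sub_zero]
    lift b to ℕ using hb
    obtain rfl : a = -((b + i : ℕ) : ℤ) - 1 := by push_cast; omega
    rw [show -((b + i : ℕ) : ℤ) - 1 + b = -i - 1 by push_cast; ring,
      show -(-((b + i : ℕ) : ℤ) - 1) - 1 = ((b + i : ℕ) : ℤ) by ring,
      cchoose_neg_natCast_sub_one, cchoose_natCast, Int.toNat_natCast, zpow_natCast, add_comm i b,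
      Nat.choose_symm_add, ← mul_assoc, ← pow_add, (Even.add_self b).neg_one_pow, one_mul]
  · rw [if_neg hb.not_ge, if_neg ha.not_ge, sub_zero, cchoose_eq_zero_of_lt (by omega) (by omega)]

theorem iotaDiffCoeff_mul (a b : ℤ) (x : ℂ) :
    iotaDiffCoeff a b * x =
      (if 0 ≤ b then (-1 : ℂ) ^ b * cchoose (a + b) b.toNat * x else 0)
        - (if 0 ≤ a then (-1 : ℂ) ^ b * cchoose (a + b) a.toNat * x else 0) := by
  simp only [iotaDiffCoeff, sub_mul, ite_mul, zero_mul]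

/-- Comparing constant terms in `(e^z - 1) g(z) = e^z + 1`. -/
theorem coeff_neg_one_eq_two {g : ℤ → ℂ} (hsupp : ∀ m : ℤ, m < -1 → g m = 0)
    (hconv : ∀ m : ℤ,
      (∑ j ∈ Finset.Icc 1 (m + 2).toNat, (1 / (j.factorial : ℂ)) * g (m - (j : ℤ)))
        = if m = 0 then 2 else if 1 ≤ m then 1 / ((m.toNat).factorial : ℂ) else 0) :
    g (-1) = 2 := by
  have h0 := hconv 0
  rw [show Icc 1 (0 + 2 : ℤ).toNat = {1, 2} by decide, sum_pair (by decide),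
    hsupp _ (by norm_num : (0 : ℤ) - (2 : ℕ) < -1)] at h0
  simpa using h0

/- `g0` is the Laurent coefficient sequence of `(e^z+1)/(e^z-1)` at `z = 0`, pinned down by its
support and by `(e^z-1)·g0(z) = e^z+1`; `D c m = -(m+1) c (m+1)` is `-d/dz` on coefficients, so
`(1/(2 i!)) D^[i] g0` are the Laurent coefficients of `f_{-i}(e^z)`. Substituting `z = z₁ - z₂` and
expanding binomially, the two sides are the coefficients of `z₁^a z₂^b`. -/
theorem stmt2 (i : ℕ) (g0 : ℤ → ℂ)
    (hsupp : ∀ m : ℤ, m < -1 → g0 m = 0)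
    (hconv : ∀ m : ℤ,
      (∑ j ∈ Finset.Icc 1 (m + 2).toNat, (1 / (j.factorial : ℂ)) * g0 (m - (j : ℤ)))
        = if m = 0 then 2 else if 1 ≤ m then 1 / ((m.toNat).factorial : ℂ) else 0)
    (D : (ℤ → ℂ) → (ℤ → ℂ)) (hD : ∀ c m, D c m = (-((m : ℂ) + 1)) * c (m + 1)) :
    ∀ a b : ℤ,
      (if 0 ≤ b then
          (-1 : ℂ) ^ b * cchoose (a + b) b.toNat *
            ((1 / (2 * (i.factorial : ℂ))) * (D^[i] g0) (a + b))
        else 0)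
      - (if 0 ≤ a then
          (-1 : ℂ) ^ b * cchoose (a + b) a.toNat *
            ((1 / (2 * (i.factorial : ℂ))) * (D^[i] g0) (a + b))
        else 0)
      = if a + b + (i : ℤ) = -1 then cchoose (-a - 1) i else 0 := by
  intro a b
  rw [← iotaDiffCoeff_mul]
  split_ifs with h
  · rw [iotaDiffCoeff_of_add_eq h, show a + b = -i - 1 by omega, iterate_apply_neg_sub_one hD,
      coeff_neg_one_eq_two hsupp hconv]
    field_simp [Nat.factorial_ne_zero]
  · rcases le_or_gt 0 (a + b) with hab | hab
    · rw [iotaDiffCoeff_of_nonneg hab, zero_mul]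
    · rw [iterate_apply_eq_zero hD hsupp (by omega) (by omega), mul_zero, mul_zero]
end

section
/- Let q = exp ħ, q_i = q^{r_i} with r_i a positive integer, a ∈ ℤ, k ∈ ℕ, and set f_{ii}(z) = (q_i^{-1} e^{z/2} − q_i e^{−z/2})/(e^{z/2} − e^{−z/2}) when a_{ii}=2, and f_{ij}(z) = q_i^{−a/2} e^{z/2} − q_i^{a/2} e^{−z/2} (for i≠j with a_{ij}=a ≤ 0). Then the telescoping product identity holds: f_{ij}(z)·∏_{b=1}^{k} f_{ii}(z − r_i(2(b−1)+a)ħ) = q_i^{−k−a/2} e^{z/2} − q_i^{k+a/2} e^{−z/2}, as elements of ℂ((z))[[ħ]]. -/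
noncomputable section

/-- `ℂ((z))`. -/
abbrev K : Type := LaurentSeries ℂ

/-- `ℂ((z))[[ħ]]`. -/
abbrev Ah : Type := PowerSeries K

/-- `e^{cz} ∈ ℂ((z))` (formal exponential). -/
def Ez (c : ℂ) : K :=
  (HahnSeries.ofPowerSeries ℤ ℂ) (PowerSeries.rescale c (PowerSeries.exp ℂ))

/-- `e^{cħ} ∈ ℂ((z))[[ħ]]`. -/
def EH (c : ℂ) : Ah :=
  PowerSeries.rescale (algebraMap ℂ K c) (PowerSeries.exp K)

/-- Constants `ℂ((z)) → ℂ((z))[[ħ]]`. -/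
def CK : K →+* Ah := PowerSeries.C (R := K)

/-!
Write `sh(t) = q_i^{-t} e^{z/2} - q_i^{t} e^{-z/2}`. Then `f_{ij}(z) = sh(a/2)`, and the shift
`z ↦ z - r_i(2b + a)ħ` turns the `b`-th factor `f_{ii}` into `sh(b + 1 + a/2) / sh(b + a/2)`, so the
product telescopes to `sh(k + a/2)`. Every `sh(t)` is invertible in `ℂ((z))[[ħ]]`, since its
`ħ⁰`-coefficient `e^{z/2} - e^{-z/2}` is a nonzero Laurent series.
-/

theorem mul_prod_range_mul_inverse {M₀ : Type*} [CommMonoidWithZero M₀] (u : ℕ → M₀)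
    (hu : ∀ n, IsUnit (u n)) (k : ℕ) :
    u 0 * ∏ b ∈ Finset.range k, u (b + 1) * Ring.inverse (u b) = u k := by
  induction k with
  | zero => simp
  | succ k ih =>
    rw [Finset.prod_range_succ, ← mul_assoc, ih, mul_left_comm, Ring.mul_inverse_cancel _ (hu k),
      mul_one]

theorem EH_add (c d : ℂ) : EH (c + d) = EH c * EH d := by
  simp only [EH, map_add, PowerSeries.exp_mul_exp_eq_exp_add]

theorem constantCoeff_EH (c : ℂ) : PowerSeries.constantCoeff (EH c) = 1 := by
  simp [EH, ← PowerSeries.coeff_zero_eq_constantCoeff_apply, PowerSeries.coeff_rescale]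

theorem Ez_half_sub_Ez_neg_half_ne_zero : Ez (1 / 2) - Ez (-(1 / 2)) ≠ 0 := by
  intro h
  rw [Ez, Ez, ← map_sub, ← map_zero (HahnSeries.ofPowerSeries ℤ ℂ)] at h
  have hz := congrArg (PowerSeries.coeff 1) (HahnSeries.ofPowerSeries_injective h)
  simp only [map_sub, PowerSeries.coeff_rescale, PowerSeries.coeff_exp, map_zero] at hz
  norm_num at hz

def qSinh (r t : ℂ) : Ah :=
  EH (r * -t) * CK (Ez (1 / 2)) - EH (r * t) * CK (Ez (-(1 / 2)))

theorem isUnit_qSinh (r t : ℂ) : IsUnit (qSinh r t) := by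
  rw [PowerSeries.isUnit_iff_constantCoeff]
  simp only [qSinh, CK, map_sub, map_mul, constantCoeff_EH, PowerSeries.constantCoeff_C, one_mul]
  exact Ez_half_sub_Ez_neg_half_ne_zero.isUnit

section Shift

variable {r s t : ℂ}

theorem shift_sub_eq_qSinh (h : s = r * (2 * t)) :
    CK (Ez (1 / 2)) * EH (-s / 2) - CK (Ez (-(1 / 2))) * EH (s / 2) = qSinh r t := by
  rw [qSinh, mul_comm, mul_comm (CK _), h]
  congr 3 <;> ring

theorem mul_shift_sub_mul_shift_eq_qSinh (h : s = r * (2 * t)) :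
    EH (r * -1) * (CK (Ez (1 / 2)) * EH (-s / 2))
      - EH (r * 1) * (CK (Ez (-(1 / 2))) * EH (s / 2)) = qSinh r (t + 1) := by
  rw [qSinh, mul_left_comm, mul_left_comm (EH _), ← EH_add, ← EH_add, mul_comm (CK _),
    mul_comm (CK _), h]
  congr 3 <;> ring

end Shift

theorem stmt5_general (ri : ℕ) (a : ℤ) (k : ℕ) :
    -- `q_i^c := e^{r_i c ħ}`
    let qi : ℂ → Ah := fun c => EH ((ri : ℂ) * c)
    -- `e^{(z - sħ)/2}` and `e^{-(z - sħ)/2}`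
    let Ep : ℂ → Ah := fun s => CK (Ez (1 / 2)) * EH (-s / 2)
    let Em : ℂ → Ah := fun s => CK (Ez (-(1 / 2))) * EH (s / 2)
    -- `f_{ii}(z - sħ)`
    let fii : ℂ → Ah := fun s =>
      (qi (-1) * Ep s - qi 1 * Em s) * Ring.inverse (Ep s - Em s)
    -- `f_{ij}(z)`
    let fij : Ah := qi (-(a : ℂ) / 2) * CK (Ez (1 / 2)) - qi ((a : ℂ) / 2) * CK (Ez (-(1 / 2)))
    fij * ∏ b ∈ Finset.range k, fii ((ri : ℂ) * (2 * (b : ℂ) + (a : ℂ)))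
      = qi (-(k : ℂ) - (a : ℂ) / 2) * CK (Ez (1 / 2))
        - qi ((k : ℂ) + (a : ℂ) / 2) * CK (Ez (-(1 / 2))) := by
  intro qi Ep Em fii fij
  set u : ℕ → Ah := fun n => qSinh ri (n + a / 2)
  have hfij : fij = u 0 := by simp only [fij, qi, u, qSinh, neg_div, Nat.cast_zero, zero_add]
  have hfii (b : ℕ) : fii (ri * (2 * b + a)) = u (b + 1) * Ring.inverse (u b) := by
    have hs : (ri : ℂ) * (2 * b + a) = ri * (2 * (b + a / 2)) := by ring
    simp only [fii, Ep, Em, qi, u]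
    rw [mul_shift_sub_mul_shift_eq_qSinh hs, shift_sub_eq_qSinh hs]
    congr 2
    push_cast
    ring
  have hrhs :
      qi (-(k : ℂ) - a / 2) * CK (Ez (1 / 2)) - qi (k + a / 2) * CK (Ez (-(1 / 2))) = u k := by
    simp only [qi, u, qSinh, neg_add']
  rw [hfij, Finset.prod_congr rfl fun b _ => hfii b, hrhs]
  exact mul_prod_range_mul_inverse u (fun n => isUnit_qSinh _ _) k

theorem stmt5 (ri : ℕ) (hri : 0 < ri) (a : ℤ) (ha : a ≤ 0) (k : ℕ) :
    -- `q_i^c := e^{r_i c ħ}`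
    let qi : ℂ → Ah := fun c => EH ((ri : ℂ) * c)
    -- `e^{(z - sħ)/2}` and `e^{-(z - sħ)/2}`
    let Ep : ℂ → Ah := fun s => CK (Ez (1 / 2)) * EH (-s / 2)
    let Em : ℂ → Ah := fun s => CK (Ez (-(1 / 2))) * EH (s / 2)
    -- `f_{ii}(z - sħ)`
    let fii : ℂ → Ah := fun s =>
      (qi (-1) * Ep s - qi 1 * Em s) * Ring.inverse (Ep s - Em s)
    -- `f_{ij}(z)`
    let fij : Ah := qi (-(a : ℂ) / 2) * CK (Ez (1 / 2)) - qi ((a : ℂ) / 2) * CK (Ez (-(1 / 2)))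
    fij * ∏ b ∈ Finset.range k, fii ((ri : ℂ) * (2 * (b : ℂ) + (a : ℂ)))
      = qi (-(k : ℂ) - (a : ℂ) / 2) * CK (Ez (1 / 2))
        - qi ((k : ℂ) + (a : ℂ) / 2) * CK (Ez (-(1 / 2))) :=
  stmt5_general ri a k

end
end

section
/- Let W be a vector space, and let a(z), b(z) ∈ Hom(W, W((z))) be fields such that for some k ∈ ℕ, (z₁−z₂)^k a(z₁)b(z₂) ∈ Hom(W, W((z₁,z₂))). Define the n-th product a(z)_n b(z) by Y_E(a(z), z₀)b(z) = z₀^{−k}((z₁−z)^k a(z₁)b(z))|_{z₁ = z + z₀}, expanded in z₀. Then this definition is independent of the choice of k: if both k and k' ≥ k satisfy the hypothesis, the two resulting expressions for Y_E(a(z), z₀)b(z) coincide. -/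
/-!
Multiplication by `(z₁ - z₂)^{k'}` factors as `(z₁ - z₂)^{k'-k}` after `(z₁ - z₂)^k`, so it
suffices to see that, on a jointly lower-truncated series, the substitution `z₁ = z + z₀` turns
one factor `z₁ - z₂` into `z₀`. After reindexing `m ↦ m + 1` in the finite coefficient sum this is
Pascal's rule `C(m+1, j+1) - C(m, j+1) = C(m, j)` for the binomial series coefficients.
-/

noncomputable section

/-- Generalized binomial coefficient `C(m,j)` for `m : ℤ`, as a rational. -/
def qchoose (m : ℤ) (j : ℕ) : ℚ :=
  (∏ t ∈ Finset.range j, ((m : ℚ) - (t : ℚ))) / (j.factorial : ℚ)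

variable {W : Type*} [AddCommGroup W] [Module ℚ W]

/-- Joint lower truncation: membership in `W((z₁,z₂))`. -/
def JT (B : ℤ → ℤ → W) : Prop :=
  ∃ N : ℤ, ∀ m n : ℤ, (m < N ∨ n < N) → B m n = 0

/-- The coefficients of `(z₁-z₂)^k · A(z₁,z₂)`. -/
def mulSub (k : ℕ) (A : ℤ → ℤ → W) : ℤ → ℤ → W := fun m n =>
  ∑ i ∈ Finset.range (k + 1),
    ((-1 : ℤ) ^ i * (k.choose i : ℤ)) • A (m - ((k - i : ℕ) : ℤ)) (n - (i : ℤ))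

/-- The coefficient of `z^p z₀^j` of `B(z+z₀, z)`, where `(z+z₀)^m` is expanded
in nonnegative powers of `z₀` via the binomial series. -/
def subst (B : ℤ → ℤ → W) (p : ℤ) (j : ℕ) : W :=
  ∑ᶠ m : ℤ, qchoose m j • B m (p - m + (j : ℤ))

section

variable {V : Type*} [AddCommGroup V]

theorem mulSub_eq_sum_choose_nsmul (k : ℕ) (A : ℤ → ℤ → V) (m n : ℤ) :
    mulSub k A m n = ∑ i ∈ Finset.range (k + 1),
      k.choose i • ((-1 : ℤ) ^ i • A (m - ((k - i : ℕ) : ℤ)) (n - i)) := by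
  simp only [mulSub, mul_smul, natCast_zsmul, smul_comm ((-1 : ℤ) ^ _)]

theorem mulSub_zero (A : ℤ → ℤ → V) : mulSub 0 A = A := by
  funext m n
  simp [mulSub]

theorem mulSub_succ (k : ℕ) (A : ℤ → ℤ → V) (m n : ℤ) :
    mulSub (k + 1) A m n = mulSub k A (m - 1) n - mulSub k A m (n - 1) := by
  rw [mulSub_eq_sum_choose_nsmul, mulSub_eq_sum_choose_nsmul, mulSub_eq_sum_choose_nsmul,
    Finset.sum_choose_succ_nsmul (fun i l => (-1 : ℤ) ^ i • A (m - (l : ℤ)) (n - i)) k,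
    sub_eq_add_neg, ← Finset.sum_neg_distrib]
  congr 1 <;> refine Finset.sum_congr rfl fun i hi => ?_
  · rw [Nat.succ_sub (Nat.lt_succ_iff.mp (Finset.mem_range.mp hi))]
    push_cast
    ring_nf
  · rw [pow_succ, mul_neg_one, neg_smul, smul_neg]
    push_cast
    ring_nf

theorem mulSub_add (a b : ℕ) (A : ℤ → ℤ → V) : mulSub (a + b) A = mulSub a (mulSub b A) := by
  induction a with
  | zero => rw [Nat.zero_add, mulSub_zero]
  | succ a ih =>
    funext m n
    rw [Nat.add_right_comm, mulSub_succ, mulSub_succ, ih]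

theorem JT.mulSub {B : ℤ → ℤ → V} (hB : JT B) (k : ℕ) : JT (mulSub k B) := by
  obtain ⟨N, hN⟩ := hB
  refine ⟨N, fun m n hmn => Finset.sum_eq_zero fun i hi => ?_⟩
  have hik := Finset.mem_range.mp hi
  rw [hN _ _ (by omega), smul_zero]


end

theorem qchoose_eq_ringChoose (m : ℤ) (j : ℕ) : qchoose m j = Ring.choose (m : ℚ) j := by
  rw [Ring.choose_eq_smul, ← Polynomial.aeval_eq_smeval, Polynomial.aeval_def,
    Polynomial.eval₂_eq_eval_map, descPochhammer_map, descPochhammer_eval_eq_prod_range,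
    qchoose, smul_eq_mul, div_eq_inv_mul]

theorem qchoose_zero_right (m : ℤ) : qchoose m 0 = 1 := by
  simp [qchoose]

theorem qchoose_succ_succ_sub (m : ℤ) (j : ℕ) :
    qchoose (m + 1) (j + 1) - qchoose m (j + 1) = qchoose m j := by
  simp only [qchoose_eq_ringChoose, Int.cast_add, Int.cast_one, Ring.choose_succ_succ,
    add_sub_cancel_right]

theorem JT.finite_support_smul {B : ℤ → ℤ → W} (hB : JT B) (c : ℤ → ℚ) (a b : ℤ) :
    (Function.support fun m => c m • B (m - a) (b - m)).Finite := by
  obtain ⟨N, hN⟩ := hB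
  refine (Set.finite_Icc (N + a) (b - N)).subset fun m hm => ?_
  by_contra hout
  rw [Set.mem_Icc, not_and_or, not_le, not_le] at hout
  exact hm (show c m • B (m - a) (b - m) = 0 by rw [hN _ _ (by omega), smul_zero])

theorem subst_eq_finsum (B : ℤ → ℤ → W) (p : ℤ) (j : ℕ) :
    subst B p j = ∑ᶠ m : ℤ, qchoose m j • B m (p + j - m) := by
  simp only [subst, sub_add_eq_add_sub]

theorem subst_mulSub_one_eq_finsum {B : ℤ → ℤ → W} (hB : JT B) (p : ℤ) (j : ℕ) :
    subst (mulSub 1 B) p j =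
      ∑ᶠ m : ℤ, (qchoose (m + 1) j - qchoose m j) • B m (p + j - 1 - m) := by
  have hfin (c : ℤ → ℚ) (b : ℤ) : (Function.support fun m => c m • B m (b - m)).Finite := by
    simpa using hB.finite_support_smul c 0 b
  calc subst (mulSub 1 B) p j
      = ∑ᶠ m : ℤ, (qchoose m j • B (m - 1) (p + j - m) - qchoose m j • B m (p + j - 1 - m)) := by
        rw [subst_eq_finsum]
        refine finsum_congr fun m => ?_
        rw [mulSub_succ, mulSub_zero, smul_sub, sub_right_comm]
    _ = ∑ᶠ m : ℤ, qchoose (m + 1) j • B m (p + j - 1 - m)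
          - ∑ᶠ m : ℤ, qchoose m j • B m (p + j - 1 - m) := by
        rw [finsum_sub_distrib (hB.finite_support_smul _ _ _) (hfin _ _),
          ← finsum_comp_equiv (Equiv.addRight (1 : ℤ))]
        simp only [Equiv.coe_addRight, add_sub_cancel_right, sub_add_eq_sub_sub_swap]
    _ = _ := by
        rw [← finsum_sub_distrib (hfin _ _) (hfin _ _)]
        simp only [sub_smul]

theorem subst_mulSub_one {B : ℤ → ℤ → W} (hB : JT B) (p : ℤ) (j : ℕ) :
    subst (mulSub 1 B) p j = if 1 ≤ j then subst B p (j - 1) else 0 := by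
  rw [subst_mulSub_one_eq_finsum hB]
  cases j with
  | zero => simp [qchoose_zero_right]
  | succ j =>
    simp only [qchoose_succ_succ_sub, subst_eq_finsum, Nat.le_add_left, if_true,
      Nat.add_sub_cancel, Nat.cast_succ, ← add_assoc, add_sub_cancel_right]

theorem subst_mulSub {B : ℤ → ℤ → W} (hB : JT B) (d : ℕ) (p : ℤ) (j : ℕ) :
    subst (mulSub d B) p j = if d ≤ j then subst B p (j - d) else 0 := by
  induction d generalizing B j with
  | zero => rw [mulSub_zero, if_pos j.zero_le, Nat.sub_zero]
  | succ d ih =>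
    rw [mulSub_add, ih (hB.mulSub 1), subst_mulSub_one hB]
    split_ifs <;> first | rfl | omega

theorem stmt18_general (A : ℤ → ℤ → W) (k k' : ℕ) (hkk' : k ≤ k')
    (hk : JT (mulSub k A)) :
    ∀ (p : ℤ) (j : ℕ),
      subst (mulSub k' A) p j =
        if k' - k ≤ j then subst (mulSub k A) p (j - (k' - k)) else 0 := by
  have hfactor : mulSub k' A = mulSub (k' - k) (mulSub k A) := by
    rw [← mulSub_add, Nat.sub_add_cancel hkk']
  intro p j
  rw [hfactor]
  exact subst_mulSub hk (k' - k) p j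

theorem stmt18 (A : ℤ → ℤ → W) (k k' : ℕ) (hkk' : k ≤ k')
    (hA2 : ∃ N : ℤ, ∀ n : ℤ, n < N → ∀ m : ℤ, A m n = 0)
    (hA1 : ∀ n : ℤ, ∃ N : ℤ, ∀ m : ℤ, m < N → A m n = 0)
    (hk : JT (mulSub k A)) :
    ∀ (p : ℤ) (j : ℕ),
      subst (mulSub k' A) p j =
        if k' - k ≤ j then subst (mulSub k A) p (j - (k' - k)) else 0 :=
  stmt18_general A k k' hkk' hk

end
end
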